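/- Let Ω1 and Ω2 be finite multisets of solution mappings that are both domain-uniform, and let F be a selection formula. Then, writing J = Ω1 ⋈ Ω2, the W3C difference satisfies Ω1 \_F Ω2 = Ω1 \ ( σ_F(J) ∪ ( J \ σ_{F ∨ ¬F}(J) ) ) as an equality of multisets (multiplicities included). In other words, the W3C difference operator is expressible using only join, selection, union and simple difference. -/
import Mathlib


open scoped Classical

noncomputable section

/-- A solution mapping: a finite partial function from variables to terms. -/
abbrev SMap (V T : Type) := Finmap (fun _ : V => T)

variable {V T : Type} [DecidableEq V] [DecidableEq T]

/-- Two solution mappings are compatible if they agree on the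
intersection of their domains. -/
def Compat (μ1 μ2 : SMap V T) : Prop :=
  ∀ x ∈ μ1, x ∈ μ2 → μ1.lookup x = μ2.lookup x

/-- Join of two multisets of solution mappings: unions of compatible pairs,
multiplicities multiply and add over all decompositions. -/
def mjoin (Ω1 Ω2 : Multiset (SMap V T)) : Multiset (SMap V T) :=
  Ω1.bind fun μ1 => (Ω2.filter fun μ2 => Compat μ1 μ2).map fun μ2 => μ1 ∪ μ2

/-- Simple difference: keep (with multiplicity) the mappings of `Ω1`
incompatible with every element of `Ω2`. -/
def msdiff (Ω1 Ω2 : Multiset (SMap V T)) : Multiset (SMap V T) :=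
  Ω1.filter fun μ1 => ∀ μ2 ∈ Ω2, ¬ Compat μ1 μ2

/-- SPARQL minus: keep (with multiplicity) the mappings of `Ω1` such that every
element of `Ω2` is incompatible with it or has disjoint domain. -/
def sminus (Ω1 Ω2 : Multiset (SMap V T)) : Multiset (SMap V T) :=
  Ω1.filter fun μ1 => ∀ μ2 ∈ Ω2, ¬ Compat μ1 μ2 ∨ μ1.keys ∩ μ2.keys = ∅

/-- Domain of a multiset of mappings: the union of the domains of its elements. -/
def mdom (Ω : Multiset (SMap V T)) : Finset V := (Ω.map Finmap.keys).sup

/-- A multiset of mappings is domain-uniform when all its elements have the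
same domain. -/
def DomUniform (Ω : Multiset (SMap V T)) : Prop :=
  ∀ μ1 ∈ Ω, ∀ μ2 ∈ Ω, Finmap.keys μ1 = Finmap.keys μ2

/-- Three truth values: true, false, error. -/
inductive TV where | t | f | e
deriving DecidableEq

/-- Strong Kleene conjunction. -/
def TV.andTV : TV → TV → TV
  | .t, q => q
  | .f, _ => .f
  | .e, .t => .e
  | .e, .f => .f
  | .e, .e => .e

/-- Strong Kleene disjunction. -/
def TV.orTV : TV → TV → TV
  | .t, _ => .t
  | .f, q => q
  | .e, .t => .t
  | .e, .f => .e
  | .e, .e => .e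

/-- Three-valued negation. -/
def TV.notTV : TV → TV
  | .t => .f
  | .f => .t
  | .e => .e

/-- Selection formulas, built from atoms `x = c`, `x = y` and `bound x`. -/
inductive SForm (V T : Type) where
  | eqc : V → T → SForm V T
  | eqv : V → V → SForm V T
  | bound : V → SForm V T
  | fand : SForm V T → SForm V T → SForm V T
  | for' : SForm V T → SForm V T → SForm V T
  | fnot : SForm V T → SForm V T

/-- Three-valued evaluation of a selection formula on a solution mapping. -/
def evalF (μ : SMap V T) : SForm V T → TV
  | .eqc x c =>
    match μ.lookup x with
    | some a => if a = c then .t else .f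
    | none => .e
  | .eqv x y =>
    match μ.lookup x, μ.lookup y with
    | some a, some b => if a = b then .t else .f
    | some _, none => .e
    | none, _ => .e
  | .bound x => if x ∈ μ then .t else .f
  | .fand F1 F2 => (evalF μ F1).andTV (evalF μ F2)
  | .for' F1 F2 => (evalF μ F1).orTV (evalF μ F2)
  | .fnot F1 => (evalF μ F1).notTV

/-- Selection: keep (with multiplicity) the mappings evaluating `F` to true. -/
def sel (F : SForm V T) (Ω : Multiset (SMap V T)) : Multiset (SMap V T) :=
  Ω.filter fun μ => evalF μ F = .t

/-- W3C difference: keep (with multiplicity) the mappings `μ1` of `Ω1` such that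
every `μ2 ∈ Ω2` is incompatible with `μ1`, or compatible with
`(μ1 ∪ μ2)(F) = false`. -/
def wdiff (F : SForm V T) (Ω1 Ω2 : Multiset (SMap V T)) : Multiset (SMap V T) :=
  Ω1.filter fun μ1 => ∀ μ2 ∈ Ω2,
    ¬ Compat μ1 μ2 ∨ (Compat μ1 μ2 ∧ evalF (μ1 ∪ μ2) F = .f)

end

section Aux
set_option linter.unusedSectionVars false
variable {V T : Type} [DecidableEq V] [DecidableEq T]

lemma compat_refl (μ : SMap V T) : Compat μ μ := fun _ _ _ => rfl

lemma eq_of_compat_keys {μ1 μ2 : SMap V T} (hk : μ1.keys = μ2.keys)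
    (hc : Compat μ1 μ2) : μ1 = μ2 := by
  apply Finmap.ext_lookup
  intro x
  by_cases hx : x ∈ μ1
  · exact hc x hx (by rwa [← Finmap.mem_keys, ← hk, Finmap.mem_keys])
  · rw [Finmap.lookup_eq_none.2 hx,
      Finmap.lookup_eq_none.2 (by rwa [← Finmap.mem_keys, ← hk, Finmap.mem_keys])]

lemma compat_union_left (μ1 μ2 : SMap V T) : Compat μ1 (μ1 ∪ μ2) := by
  intro x hx _; exact (Finmap.lookup_union_left hx).symm

lemma evalF_taut (μ : SMap V T) (F : SForm V T) :
    evalF μ (SForm.for' F (SForm.fnot F)) = .t ↔ evalF μ F ≠ .e := by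
  show (evalF μ F).orTV (evalF μ F).notTV = .t ↔ _
  cases evalF μ F <;> simp [TV.orTV, TV.notTV]

lemma mem_mjoin {Ω1 Ω2 : Multiset (SMap V T)} {ν : SMap V T} :
    ν ∈ mjoin Ω1 Ω2 ↔ ∃ μ1 ∈ Ω1, ∃ μ2 ∈ Ω2, Compat μ1 μ2 ∧ ν = μ1 ∪ μ2 := by
  simp only [mjoin, Multiset.mem_bind, Multiset.mem_map, Multiset.mem_filter]
  constructor
  · rintro ⟨μ1, h1, μ2, ⟨h2, hc⟩, rfl⟩; exact ⟨μ1, h1, μ2, h2, hc, rfl⟩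
  · rintro ⟨μ1, h1, μ2, h2, hc, rfl⟩; exact ⟨μ1, h1, μ2, ⟨h2, hc⟩, rfl⟩

lemma keys_mjoin_uniform {Ω1 Ω2 : Multiset (SMap V T)}
    (h1 : DomUniform Ω1) (h2 : DomUniform Ω2)
    {ν ν' : SMap V T} (hν : ν ∈ mjoin Ω1 Ω2) (hν' : ν' ∈ mjoin Ω1 Ω2) :
    ν.keys = ν'.keys := by
  obtain ⟨a, ha, b, hb, _, rfl⟩ := mem_mjoin.1 hν
  obtain ⟨a', ha', b', hb', _, rfl⟩ := mem_mjoin.1 hν'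
  rw [Finmap.keys_union, Finmap.keys_union, h1 a ha a' ha', h2 b hb b' hb']

end Aux

/-- the W3C difference is expressible with join, selection,
union (multiset sum) and simple difference, for domain-uniform operands. -/
theorem stmt_0 {V T : Type} [DecidableEq V] [DecidableEq T]
    (Ω1 Ω2 : Multiset (SMap V T)) (F : SForm V T)
    (h1 : DomUniform Ω1) (h2 : DomUniform Ω2) :
    wdiff F Ω1 Ω2 =
      msdiff Ω1
        (sel F (mjoin Ω1 Ω2) +
          msdiff (mjoin Ω1 Ω2) (sel (SForm.for' F (SForm.fnot F)) (mjoin Ω1 Ω2))) := by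
  rw [wdiff, msdiff]
  apply Multiset.filter_congr
  intro μ hμ
  set J := mjoin Ω1 Ω2 with hJ
  have hmemX : ∀ ν, ν ∈ sel F J +
      msdiff J (sel (SForm.for' F (SForm.fnot F)) J) ↔
      ν ∈ J ∧ (evalF ν F = .t ∨ evalF ν F = .e) := by
    intro ν
    rw [Multiset.mem_add]
    constructor
    · rintro (hν | hν)
      · rw [sel, Multiset.mem_filter] at hν
        exact ⟨hν.1, Or.inl hν.2⟩
      · rw [msdiff, Multiset.mem_filter] at hν
        refine ⟨hν.1, Or.inr ?_⟩
        by_contra he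
        have hsel : ν ∈ sel (SForm.for' F (SForm.fnot F)) J := by
          rw [sel, Multiset.mem_filter]
          exact ⟨hν.1, (evalF_taut ν F).2 he⟩
        exact hν.2 ν hsel (compat_refl ν)
    · rintro ⟨hνJ, ht | he⟩
      · exact Or.inl (by rw [sel, Multiset.mem_filter]; exact ⟨hνJ, ht⟩)
      · refine Or.inr ?_
        rw [msdiff, Multiset.mem_filter]
        refine ⟨hνJ, ?_⟩
        intro ν' hν' hcc
        rw [sel, Multiset.mem_filter] at hν'
        have hne := (evalF_taut ν' F).1 hν'.2
        have : ν = ν' := eq_of_compat_keys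
          (keys_mjoin_uniform h1 h2 hνJ hν'.1) hcc
        rw [← this] at hne
        exact hne he
  constructor
  · intro hP ν hν hcompat
    obtain ⟨hνJ, hte⟩ := (hmemX ν).1 hν
    obtain ⟨a, ha, b, hb, hab, rfl⟩ := mem_mjoin.1 hνJ
    have hka : μ.keys = a.keys := h1 μ hμ a ha
    -- μ ∪ b = a ∪ b
    have hun : μ ∪ b = a ∪ b := by
      apply Finmap.ext_lookup
      intro x
      by_cases hx : x ∈ μ
      · have hxa : x ∈ a := by
          rwa [← Finmap.mem_keys, ← hka, Finmap.mem_keys]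
        rw [Finmap.lookup_union_left hx]
        exact hcompat x hx (Finmap.mem_union.2 (Or.inl hxa))
      · have hxa : x ∉ a := by
          rwa [← Finmap.mem_keys, ← hka, Finmap.mem_keys]
        rw [Finmap.lookup_union_right hx, Finmap.lookup_union_right hxa]
    have hcb : Compat μ b := by
      intro x hx hxb
      have hxa : x ∈ a := by
        rwa [← Finmap.mem_keys, ← hka, Finmap.mem_keys]
      calc μ.lookup x = (a ∪ b).lookup x :=
            hcompat x hx (Finmap.mem_union.2 (Or.inl hxa))
        _ = a.lookup x := Finmap.lookup_union_left hxa
        _ = b.lookup x := hab x hxa hxb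
    rcases hP b hb with h | ⟨_, hf⟩
    · exact h hcb
    · rw [hun] at hf
      rcases hte with ht | he
      · rw [ht] at hf; cases hf
      · rw [he] at hf; cases hf
  · intro hQ μ2 hμ2
    by_cases hc : Compat μ μ2
    · refine Or.inr ⟨hc, ?_⟩
      have hνJ : μ ∪ μ2 ∈ J := mem_mjoin.2 ⟨μ, hμ, μ2, hμ2, hc, rfl⟩
      have hcν : Compat μ (μ ∪ μ2) := compat_union_left μ μ2
      have hnot : ¬ (evalF (μ ∪ μ2) F = .t ∨ evalF (μ ∪ μ2) F = .e) := by
        intro hte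
        exact hQ (μ ∪ μ2) ((hmemX (μ ∪ μ2)).2 ⟨hνJ, hte⟩) hcν
      cases h : evalF (μ ∪ μ2) F with
      | t => exact absurd (Or.inl h) hnot
      | e => exact absurd (Or.inr h) hnot
      | f => rfl
    · exact Or.inl hc
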